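/- arXiv:2002.08838 — 4 statements merged into one kernel-verified Lean document; each statement's English description precedes it below -/
import Mathlib

section
/- For every x ∈ ℝⁿ and i ∈ {1,2}, the network output decomposes as a tropical rational function: f_i(x) = H_i(x) − Q_i(x). -/
open Matrix Finset

/-- Entrywise positive part of a matrix. -/
noncomputable def matPos {p n : ℕ} (M : Matrix (Fin p) (Fin n) ℝ) : Matrix (Fin p) (Fin n) ℝ :=
  fun i j => max (M i j) 0

/-- Entrywise negative part of a matrix. -/
noncomputable def matNeg {p n : ℕ} (M : Matrix (Fin p) (Fin n) ℝ) : Matrix (Fin p) (Fin n) ℝ :=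
  fun i j => max (-(M i j)) 0

/-- Output `i` of the bias-free network `f(x) = B max(Ax, 0)`. -/
noncomputable def netOut {p n k : ℕ} (A : Matrix (Fin p) (Fin n) ℝ)
    (B : Matrix (Fin k) (Fin p) ℝ) (i : Fin k) (x : Fin n → ℝ) : ℝ :=
  ∑ j, B i j * max (A j ⬝ᵥ x) 0

/-- The tropical polynomial `H_i`. -/
noncomputable def Hpoly {p n k : ℕ} (A : Matrix (Fin p) (Fin n) ℝ)
    (B : Matrix (Fin k) (Fin p) ℝ) (i : Fin k) (x : Fin n → ℝ) : ℝ :=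
  ∑ j, (matPos B i j * max (matPos A j ⬝ᵥ x) (matNeg A j ⬝ᵥ x)
        + matNeg B i j * (matNeg A j ⬝ᵥ x))

/-- The tropical polynomial `Q_i`. -/
noncomputable def Qpoly {p n k : ℕ} (A : Matrix (Fin p) (Fin n) ℝ)
    (B : Matrix (Fin k) (Fin p) ℝ) (i : Fin k) (x : Fin n → ℝ) : ℝ :=
  ∑ j, (matNeg B i j * max (matPos A j ⬝ᵥ x) (matNeg A j ⬝ᵥ x)
        + matPos B i j * (matNeg A j ⬝ᵥ x))

/-- Each output of the network is a tropical rational function: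
`f_i(x) = H_i(x) − Q_i(x)`. -/
theorem net_eq_tropical_rational {p n : ℕ} (A : Matrix (Fin p) (Fin n) ℝ)
    (B : Matrix (Fin 2) (Fin p) ℝ) (x : Fin n → ℝ) (i : Fin 2) :
    netOut A B i x = Hpoly A B i x - Qpoly A B i x := by
  unfold netOut Hpoly Qpoly
  rw [← Finset.sum_sub_distrib]
  apply Finset.sum_congr rfl
  intro j _
  have hdot : A j ⬝ᵥ x = matPos A j ⬝ᵥ x - matNeg A j ⬝ᵥ x := by
    simp only [dotProduct, ← Finset.sum_sub_distrib]
    apply Finset.sum_congr rfl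
    intro l _
    simp only [matPos, matNeg]
    rcases le_total (A j l) 0 with h | h
    · rw [max_eq_right h, max_eq_left (neg_nonneg.mpr h)]; ring
    · rw [max_eq_left h, max_eq_right (by linarith : -(A j l) ≤ 0)]; ring
  have hB : B i j = matPos B i j - matNeg B i j := by
    simp only [matPos, matNeg]
    rcases le_total (B i j) 0 with h | h
    · rw [max_eq_right h, max_eq_left (neg_nonneg.mpr h)]; ring
    · rw [max_eq_left h, max_eq_right (by linarith : -(B i j) ≤ 0)]; ring
  have hmax : max (A j ⬝ᵥ x) 0 = max (matPos A j ⬝ᵥ x) (matNeg A j ⬝ᵥ x) - matNeg A j ⬝ᵥ x := by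
    rw [hdot]
    rcases le_total (matPos A j ⬝ᵥ x) (matNeg A j ⬝ᵥ x) with h | h
    · rw [max_eq_right h, max_eq_right (by linarith)]; ring
    · rw [max_eq_left h, max_eq_left (by linarith)]
  rw [hmax, hB]
  ring
end

section
/- The decision boundary is contained in the tropical hypersurface of R: if x ∈ ℝⁿ satisfies f₁(x) = f₂(x), then H₁(x) + Q₂(x) = H₂(x) + Q₁(x) = R(x), i.e., the maximum defining R(x) := max(H₁(x)+Q₂(x), H₂(x)+Q₁(x)) is attained by both of its two terms at x. -/
open Matrix Finset

/-!
Since `max (a⁺ ⬝ x) (a⁻ ⬝ x) - a⁻ ⬝ x = max (a ⬝ x) 0` and `b⁺ - b⁻ = b`, each `H_i - Q_i` is the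
network output `f_i`. On the decision boundary `H₁ - Q₁ = H₂ - Q₂`, i.e. `H₁ + Q₂ = H₂ + Q₁`, so the
two terms of the maximum `R` coincide.
-/

lemma matPos_sub_matNeg_apply {p n : ℕ} (M : Matrix (Fin p) (Fin n) ℝ) (i : Fin p) (j : Fin n) :
    matPos M i j - matNeg M i j = M i j :=
  posPart_sub_negPart (M i j)

lemma max_matPos_dotProduct_sub_matNeg_dotProduct {p n : ℕ} (A : Matrix (Fin p) (Fin n) ℝ)
    (j : Fin p) (x : Fin n → ℝ) :
    max (matPos A j ⬝ᵥ x) (matNeg A j ⬝ᵥ x) - matNeg A j ⬝ᵥ x = max (A j ⬝ᵥ x) 0 := by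
  rw [← max_sub_sub_right, sub_self, ← sub_dotProduct]
  congr 2
  exact funext (matPos_sub_matNeg_apply A j)

lemma Hpoly_sub_Qpoly {p n k : ℕ} (A : Matrix (Fin p) (Fin n) ℝ)
    (B : Matrix (Fin k) (Fin p) ℝ) (i : Fin k) (x : Fin n → ℝ) :
    Hpoly A B i x - Qpoly A B i x = netOut A B i x := by
  rw [Hpoly, Qpoly, netOut, ← Finset.sum_sub_distrib]
  refine Finset.sum_congr rfl fun j _ => ?_
  calc _ = (matPos B i j - matNeg B i j)
          * (max (matPos A j ⬝ᵥ x) (matNeg A j ⬝ᵥ x) - matNeg A j ⬝ᵥ x) := by ring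
    _ = B i j * max (A j ⬝ᵥ x) 0 := by
      rw [matPos_sub_matNeg_apply, max_matPos_dotProduct_sub_matNeg_dotProduct]

/-- If `x` is on the decision boundary, i.e. `f₁(x) = f₂(x)`, then the two monomials of
`R = (H₁ ⊙ Q₂) ⊕ (H₂ ⊙ Q₁)` agree at `x` and both attain the maximum defining `R(x)`;
hence the decision boundary is contained in the tropical hypersurface `T(R)`. -/
theorem decision_boundary_subset_tropical_hypersurface {p n : ℕ}
    (A : Matrix (Fin p) (Fin n) ℝ) (B : Matrix (Fin 2) (Fin p) ℝ) (x : Fin n → ℝ)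
    (hx : netOut A B 0 x = netOut A B 1 x) :
    Hpoly A B 0 x + Qpoly A B 1 x = Hpoly A B 1 x + Qpoly A B 0 x ∧
    Hpoly A B 0 x + Qpoly A B 1 x
      = max (Hpoly A B 0 x + Qpoly A B 1 x) (Hpoly A B 1 x + Qpoly A B 0 x) ∧
    Hpoly A B 1 x + Qpoly A B 0 x
      = max (Hpoly A B 0 x + Qpoly A B 1 x) (Hpoly A B 1 x + Qpoly A B 0 x) := by
  have hH0 := Hpoly_sub_Qpoly A B 0 x
  have hH1 := Hpoly_sub_Qpoly A B 1 x
  have hR : Hpoly A B 0 x + Qpoly A B 1 x = Hpoly A B 1 x + Qpoly A B 0 x := by linarith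
  exact ⟨hR, by rw [hR, max_self], by rw [hR, max_self]⟩
end

section
/- For every x ∈ ℝⁿ, H₁(x) + Q₂(x) = sup_{z ∈ Z₁} ⟨z, x⟩ and H₂(x) + Q₁(x) = sup_{z ∈ Z₂} ⟨z, x⟩; that is, the tropical polynomials H₁⊙Q₂ and H₂⊙Q₁ are the support functions of the zonotopes Z₁ and Z₂, respectively. -/
open Matrix Finset Pointwise

/-- The zonotope `Z_{ij}`: Minkowski sum of the line segments
`[(B⁺(i,m)+B⁻(j,m))·A⁺(m,:), (B⁺(i,m)+B⁻(j,m))·A⁻(m,:)]` shifted by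
`(A⁻)ᵀ (B⁻(i,:)+B⁺(j,:))ᵀ`. -/
noncomputable def zono {p n k : ℕ} (A : Matrix (Fin p) (Fin n) ℝ)
    (B : Matrix (Fin k) (Fin p) ℝ) (i j : Fin k) : Set (Fin n → ℝ) :=
  (∑ m : Fin p,
      segment ℝ ((matPos B i m + matNeg B j m) • matPos A m)
        ((matPos B i m + matNeg B j m) • matNeg A m))
    + ({fun t => ∑ m, matNeg A m t * (matNeg B i m + matPos B j m)} : Set (Fin n → ℝ))

/-!
A linear functional attains its maximum over a segment `[u, v]` at an endpoint, and maxima over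
a Minkowski sum add up, so the support function of the zonotope `∑ₘ [uₘ, vₘ] + {w}` at `x` is
`∑ₘ max ⟨uₘ, x⟩ ⟨vₘ, x⟩ + ⟨w, x⟩`. Grouping the terms of `Hᵢ + Qⱼ` by the hidden neuron `m`
gives exactly this expression, with `uₘ, vₘ` the rows of `A⁺, A⁻` scaled by `B⁺(i,m) + B⁻(j,m)`
and `w` the shift.
-/

section SupportFunction

variable {M : Type*} [AddCommMonoid M] [PartialOrder M] [IsOrderedAddMonoid M]

lemma IsGreatest.add {s t : Set M} {a b : M} (ha : IsGreatest s a) (hb : IsGreatest t b) :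
    IsGreatest (s + t) (a + b) :=
  ⟨Set.add_mem_add ha.1 hb.1, add_mem_upperBounds_add ha.2 hb.2⟩

lemma isGreatest_finsetSum {ι : Type*} (s : Finset ι) (S : ι → Set M) (a : ι → M)
    (h : ∀ i ∈ s, IsGreatest (S i) (a i)) : IsGreatest (∑ i ∈ s, S i) (∑ i ∈ s, a i) := by
  induction s using Finset.cons_induction with
  | empty => exact isGreatest_singleton
  | cons i s _ ih =>
    rw [Finset.sum_cons, Finset.sum_cons]
    exact (h i (Finset.mem_cons_self i s)).add
      (ih fun j hj => h j (Finset.mem_cons_of_mem hj))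

variable {𝕜 E : Type*} [Field 𝕜] [LinearOrder 𝕜] [IsStrictOrderedRing 𝕜]
  [AddCommGroup E] [Module 𝕜 E]

lemma isGreatest_image_segment (L : E →ₗ[𝕜] 𝕜) (a b : E) :
    IsGreatest (L '' segment 𝕜 a b) (max (L a) (L b)) := by
  rw [← L.coe_toAffineMap, image_segment, segment_eq_uIcc]
  exact isGreatest_Icc min_le_max

lemma isGreatest_image_zonotope {ι : Type*} [Fintype ι] (L : E →ₗ[𝕜] 𝕜) (u v : ι → E) (w : E) :
    IsGreatest (L '' (∑ m, segment 𝕜 (u m) (v m) + {w}))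
      (∑ m, max (L (u m)) (L (v m)) + L w) := by
  rw [Set.image_add, Set.image_finsetSum, Set.image_singleton]
  exact (isGreatest_finsetSum _ _ _ fun m _ => isGreatest_image_segment L (u m) (v m)).add
    isGreatest_singleton

end SupportFunction

lemma Hpoly_add_Qpoly {p n k : ℕ} (A : Matrix (Fin p) (Fin n) ℝ)
    (B : Matrix (Fin k) (Fin p) ℝ) (i j : Fin k) (x : Fin n → ℝ) :
    Hpoly A B i x + Qpoly A B j x =
      ∑ m, (matPos B i m + matNeg B j m) * max (matPos A m ⬝ᵥ x) (matNeg A m ⬝ᵥ x)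
        + ∑ m, (matNeg B i m + matPos B j m) * (matNeg A m ⬝ᵥ x) := by
  rw [Hpoly, Qpoly, ← Finset.sum_add_distrib, ← Finset.sum_add_distrib]
  exact Finset.sum_congr rfl fun m _ => by ring

lemma Hpoly_add_Qpoly_eq_sSup {p n k : ℕ} (A : Matrix (Fin p) (Fin n) ℝ)
    (B : Matrix (Fin k) (Fin p) ℝ) (i j : Fin k) (x : Fin n → ℝ) :
    Hpoly A B i x + Qpoly A B j x = sSup ((fun z => z ⬝ᵥ x) '' zono A B i j) := by
  refine Eq.symm <|
    (isGreatest_image_zonotope ((dotProductBilin ℝ ℝ).flip x) _ _ _).csSup_eq.trans ?_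
  rw [Hpoly_add_Qpoly]
  congr 1
  · refine Finset.sum_congr rfl fun m _ => ?_
    have hc : 0 ≤ matPos B i m + matNeg B j m := add_nonneg (le_max_right _ _) (le_max_right _ _)
    simp only [map_smul, LinearMap.flip_apply, dotProductBilin_apply_apply, smul_eq_mul,
      mul_max_of_nonneg _ _ hc]
  · change ((matNeg A)ᵀ *ᵥ _) ⬝ᵥ x = _
    rw [mulVec_transpose, ← dotProduct_mulVec]
    rfl

/-- `H₁ ⊙ Q₂` and `H₂ ⊙ Q₁` are the support functions of the zonotopes `Z₁` and `Z₂`. -/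
theorem tropical_monomials_support_functions {p n : ℕ}
    (A : Matrix (Fin p) (Fin n) ℝ) (B : Matrix (Fin 2) (Fin p) ℝ) (x : Fin n → ℝ) :
    Hpoly A B 0 x + Qpoly A B 1 x = sSup ((fun z => z ⬝ᵥ x) '' zono A B 0 1) ∧
    Hpoly A B 1 x + Qpoly A B 0 x = sSup ((fun z => z ⬝ᵥ x) '' zono A B 1 0) :=
  ⟨Hpoly_add_Qpoly_eq_sSup A B 0 1 x, Hpoly_add_Qpoly_eq_sSup A B 1 0 x⟩
end

section
/- The dual subdivision of R is the convex hull of the two zonotopes: for every x ∈ ℝⁿ, R(x) := max(H₁(x)+Q₂(x), H₂(x)+Q₁(x)) = sup_{z ∈ convexHull(Z₁ ∪ Z₂)} ⟨z, x⟩. -/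
open Matrix Finset Pointwise

/-! The functional `z ↦ z ⬝ᵥ x` maps a segment `[u, v]` onto an interval with top
`max (u ⬝ᵥ x) (v ⬝ᵥ x)` and turns Minkowski sums into sums, so its maximum over the zonotope
`Z_{ij}` is `∑ₘ cₘ max (A⁺ₘ ⬝ᵥ x) (A⁻ₘ ⬝ᵥ x)` plus its value at the shift, which regroups as
`H_i(x) + Q_j(x)`. A linear functional has the same maximum on a set and on its convex hull, and
on `Z₁ ∪ Z₂` that maximum is the larger of the two. -/

theorem IsGreatest.convexHull {𝕜 β : Type*} [Semiring 𝕜] [PartialOrder 𝕜] [AddCommMonoid β]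
    [PartialOrder β] [IsOrderedAddMonoid β] [Module 𝕜 β] [PosSMulMono 𝕜 β] {s : Set β} {a : β}
    (h : IsGreatest s a) : IsGreatest (convexHull 𝕜 s) a :=
  ⟨subset_convexHull 𝕜 s h.1, convexHull_min h.2 (convex_Iic a)⟩

theorem IsGreatest.add_s5 {α : Type*} [Add α] [Preorder α] [AddLeftMono α] [AddRightMono α]
    {s t : Set α} {a b : α} (hs : IsGreatest s a) (ht : IsGreatest t b) :
    IsGreatest (s + t) (a + b) :=
  hs.image2 (fun _ _ _ h => add_le_add_left h _) (fun _ _ _ h => add_le_add_right h _) ht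

theorem IsGreatest.finsetSum {ι α : Type*} [AddCommMonoid α] [Preorder α] [AddLeftMono α]
    [AddRightMono α] {s : Finset ι} {S : ι → Set α} {a : ι → α}
    (h : ∀ i ∈ s, IsGreatest (S i) (a i)) : IsGreatest (∑ i ∈ s, S i) (∑ i ∈ s, a i) := by
  induction s using Finset.cons_induction with
  | empty => exact isGreatest_singleton
  | cons j s hj ih =>
    rw [sum_cons, sum_cons]
    exact (h j (mem_cons_self j s)).add_s5 (ih fun i hi => h i (mem_cons_of_mem hi))

theorem isGreatest_image_segment_s5 {𝕜 E : Type*} [Field 𝕜] [LinearOrder 𝕜] [IsStrictOrderedRing 𝕜]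
    [AddCommGroup E] [Module 𝕜 E] (f : E →ₗ[𝕜] 𝕜) (u v : E) :
    IsGreatest (f '' segment 𝕜 u v) (max (f u) (f v)) := by
  rw [← f.coe_toAffineMap, image_segment, segment_eq_Icc']
  exact isGreatest_Icc min_le_max

theorem Hpoly_add_Qpoly_eq {p n k : ℕ} (A : Matrix (Fin p) (Fin n) ℝ)
    (B : Matrix (Fin k) (Fin p) ℝ) (i j : Fin k) (x : Fin n → ℝ) :
    Hpoly A B i x + Qpoly A B j x =
      ∑ m, max (((matPos B i m + matNeg B j m) • matPos A m) ⬝ᵥ x)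
          (((matPos B i m + matNeg B j m) • matNeg A m) ⬝ᵥ x)
        + (fun t => ∑ m, matNeg A m t * (matNeg B i m + matPos B j m)) ⬝ᵥ x := by
  have hshift : (fun t => ∑ m, matNeg A m t * (matNeg B i m + matPos B j m)) ⬝ᵥ x
      = ∑ m, (matNeg B i m + matPos B j m) * (matNeg A m ⬝ᵥ x) := by
    change (matNeg A)ᵀ *ᵥ (matNeg B i + matPos B j) ⬝ᵥ x = _
    rw [mulVec_transpose, ← dotProduct_mulVec]
    rfl
  have hcoef : ∀ m, 0 ≤ matPos B i m + matNeg B j m :=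
    fun m => add_nonneg (le_max_right _ _) (le_max_right _ _)
  simp only [hshift, smul_dotProduct, smul_eq_mul, ← mul_max_of_nonneg _ _ (hcoef _), Hpoly,
    Qpoly, ← sum_add_distrib]
  exact sum_congr rfl fun m _ => by ring

theorem isGreatest_image_zono {p n k : ℕ} (A : Matrix (Fin p) (Fin n) ℝ)
    (B : Matrix (Fin k) (Fin p) ℝ) (i j : Fin k) (x : Fin n → ℝ) :
    IsGreatest ((· ⬝ᵥ x) '' zono A B i j) (Hpoly A B i x + Qpoly A B j x) := by
  let f : (Fin n → ℝ) →ₗ[ℝ] ℝ := (dotProductBilin ℝ ℝ).flip x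
  have hsegments := IsGreatest.finsetSum (s := univ) fun m _ =>
    isGreatest_image_segment_s5 f ((matPos B i m + matNeg B j m) • matPos A m)
      ((matPos B i m + matNeg B j m) • matNeg A m)
  rw [Hpoly_add_Qpoly_eq]
  change IsGreatest (f '' zono A B i j) _
  rw [zono, Set.image_add f, Set.image_finsetSum, Set.image_singleton]
  exact hsegments.add_s5 isGreatest_singleton

/-- The dual subdivision of `R` is the convex hull of the two zonotopes: `R(x)`, the maximum
of the two tropical monomials, is the support function of `convexHull (Z₁ ∪ Z₂)`. -/
theorem dual_subdivision_convexHull_zonotopes {p n : ℕ}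
    (A : Matrix (Fin p) (Fin n) ℝ) (B : Matrix (Fin 2) (Fin p) ℝ) (x : Fin n → ℝ) :
    max (Hpoly A B 0 x + Qpoly A B 1 x) (Hpoly A B 1 x + Qpoly A B 0 x)
      = sSup ((fun z => z ⬝ᵥ x) '' convexHull ℝ (zono A B 0 1 ∪ zono A B 1 0)) := by
  let f : (Fin n → ℝ) →ₗ[ℝ] ℝ := (dotProductBilin ℝ ℝ).flip x
  change _ = sSup (f '' _)
  rw [f.image_convexHull, Set.image_union]
  exact (((isGreatest_image_zono A B 0 1 x).union
    (isGreatest_image_zono A B 1 0 x)).convexHull).csSup_eq.symm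
end
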